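/- arXiv:2103.00888 — 3 statements merged into one kernel-verified Lean document; each statement's English description precedes it below -/
import Mathlib

section
/- For every σ ∈ ℝ^n_+ and every τ ∈ ℝ^n, each entry of 𝓕 is differentiable at σ with directional derivative (d/dt)|_{t=0} 𝓕_{j,k}(σ + tτ) = −Σ_{i=1}^n τ_i b_i(u_σ^{l_j}, u_σ^{l_k}); consequently, if τ ≥ 0 (elementwise), then the matrix 𝓕'(σ)τ := ((d/dt)|_{t=0} 𝓕_{j,k}(σ + tτ))_{j,k=1}^m is negative semidefinite. -/
/-!
Write `A = b_σ` and `T = Σ τᵢ bᵢ`, so that `b_{σ+tτ} = A + t T`, which stays uniformly coercive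
for small `t`. With `x t = u_{σ+tτ}^{l_j}` and `y t = u_{σ+tτ}^{l_k}`, symmetry of the forms gives
the exact difference quotient `(l_k(x t) - l_k(x 0)) / t = -T(x 0, y t)`, and coercivity makes
`y` Lipschitz at `0`, so the quotient tends to `-T(x 0, y 0)`. Negative semidefiniteness follows
from `Σ_{j,k} g_j T(x_j, x_k) g_k = T(w, w) ≥ 0` with `w = Σ_j g_j x_j`.
-/

open Filter Topology

section BilinearForm

variable {E : Type*} [NormedAddCommGroup E] [NormedSpace ℝ E]

theorem norm_sub_le_of_coercive {A B : E →L[ℝ] E →L[ℝ] ℝ} {c : ℝ} (hc : 0 < c)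
    (hB : ∀ v, c * ‖v‖ ^ 2 ≤ B v v) {f : E →L[ℝ] ℝ} {x y : E}
    (hx : ∀ v, A x v = f v) (hy : ∀ v, B y v = f v) :
    ‖y - x‖ ≤ ‖B - A‖ * ‖x‖ / c := by
  set d := y - x
  have hBd : B d d = -(B - A) x d := by
    simp only [d, map_sub, sub_apply, hx, hy]
    ring
  have hle : c * ‖d‖ ^ 2 ≤ ‖B - A‖ * ‖x‖ * ‖d‖ :=
    calc c * ‖d‖ ^ 2 ≤ -(B - A) x d := hBd ▸ hB d
      _ ≤ ‖(B - A) x d‖ := (neg_le_abs _).trans (Real.norm_eq_abs _).ge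
      _ ≤ ‖B - A‖ * ‖x‖ * ‖d‖ := (B - A).le_opNorm₂ x d
  rw [le_div_iff₀ hc]
  rcases (norm_nonneg d).eq_or_lt with hd | hd
  · rw [← hd, zero_mul]
    positivity
  · nlinarith

theorem apply_sub_apply_eq_of_symm {A B : E →L[ℝ] E →L[ℝ] ℝ} (hB : ∀ x y, B x y = B y x)
    {f g : E →L[ℝ] ℝ} {x₀ x y : E} (hx₀ : ∀ v, A x₀ v = f v) (hx : ∀ v, B x v = f v)
    (hy : ∀ v, B y v = g v) :
    g x - g x₀ = (A - B) x₀ y := by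
  rw [← hy x, ← hy x₀, hB y x, hB y x₀, hx, ← hx₀]
  rfl

variable {A T : E →L[ℝ] E →L[ℝ] ℝ} {c : ℝ}

theorem tendsto_solution_of_coercive (hc : 0 < c)
    (hcoer : ∀ᶠ t in 𝓝 (0 : ℝ), ∀ v, c * ‖v‖ ^ 2 ≤ (A + t • T) v v)
    {f : E →L[ℝ] ℝ} {y : ℝ → E} (hy : ∀ᶠ t in 𝓝 (0 : ℝ), ∀ v, (A + t • T) (y t) v = f v) :
    Tendsto y (𝓝 0) (𝓝 (y 0)) := by
  have hy₀ : ∀ v, A (y 0) v = f v := by simpa using hy.self_of_nhds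
  rw [tendsto_iff_norm_sub_tendsto_zero]
  refine squeeze_zero' (g := fun t => ‖t‖ * ‖T‖ * ‖y 0‖ / c)
    (.of_forall fun _ => norm_nonneg _) ?_ ?_
  · filter_upwards [hcoer, hy] with t ht hyt
    calc ‖y t - y 0‖ ≤ ‖A + t • T - A‖ * ‖y 0‖ / c :=
          norm_sub_le_of_coercive hc ht hy₀ hyt
      _ ≤ ‖t‖ * ‖T‖ * ‖y 0‖ / c := by
          rw [show A + t • T - A = t • T by abel]
          gcongr
          exact T.opNorm_smul_le t
  · simpa using ((continuous_norm.mul continuous_const).mul continuous_const).div_const c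
      |>.tendsto (0 : ℝ)

theorem hasDerivAt_apply_solution (hA : ∀ x y, A x y = A y x) (hT : ∀ x y, T x y = T y x)
    (hc : 0 < c) (hcoer : ∀ᶠ t in 𝓝 (0 : ℝ), ∀ v, c * ‖v‖ ^ 2 ≤ (A + t • T) v v)
    {f g : E →L[ℝ] ℝ} {x y : ℝ → E}
    (hx : ∀ᶠ t in 𝓝 (0 : ℝ), ∀ v, (A + t • T) (x t) v = f v)
    (hy : ∀ᶠ t in 𝓝 (0 : ℝ), ∀ v, (A + t • T) (y t) v = g v) :
    HasDerivAt (fun t => g (x t)) (-T (x 0) (y 0)) 0 := by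
  have hx₀ : ∀ v, A (x 0) v = f v := by simpa using hx.self_of_nhds
  have hslope : ∀ᶠ t in 𝓝[≠] (0 : ℝ), -T (x 0) (y t) = t⁻¹ • (g (x (0 + t)) - g (x 0)) := by
    filter_upwards [nhdsWithin_le_nhds (hx.and hy), self_mem_nhdsWithin] with t ⟨hxt, hyt⟩ ht
    have hsymm : ∀ v w, (A + t • T) v w = (A + t • T) w v := fun v w => by
      simp only [add_apply, smul_apply, hA v w, hT v w]
    rw [zero_add, apply_sub_apply_eq_of_symm hsymm hx₀ hxt hyt]
    simp only [sub_apply, add_apply, smul_apply, smul_eq_mul]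
    rw [sub_add_cancel_left, mul_neg, inv_mul_cancel_left₀ ht]
  have hlim : Tendsto (fun t => -T (x 0) (y t)) (𝓝[≠] 0) (𝓝 (-T (x 0) (y 0))) :=
    ((T (x 0)).continuous.tendsto _ |>.comp
      (tendsto_solution_of_coercive hc hcoer hy)).neg.mono_left nhdsWithin_le_nhds
  exact hasDerivAt_iff_tendsto_slope_zero.2 (hlim.congr' hslope)

theorem sum_sum_mul_apply_mul {ι : Type*} [Fintype ι] (T : E →L[ℝ] E →L[ℝ] ℝ) (x : ι → E)
    (g : ι → ℝ) :
    ∑ j, ∑ k, g j * T (x j) (x k) * g k = T (∑ j, g j • x j) (∑ k, g k • x k) := by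
  simp only [map_sum, map_smul, sum_apply, smul_apply, smul_eq_mul, Finset.mul_sum]
  rw [Finset.sum_comm]
  exact Finset.sum_congr rfl fun j _ => Finset.sum_congr rfl fun k _ => by ring

end BilinearForm

section WeightedForm

variable {E ι : Type*} [NormedAddCommGroup E] [NormedSpace ℝ E] [Fintype ι]

noncomputable def weightedForm (b₀ : E →L[ℝ] E →L[ℝ] ℝ) (b : ι → E →L[ℝ] E →L[ℝ] ℝ) (σ : ι → ℝ) :
    E →L[ℝ] E →L[ℝ] ℝ :=
  b₀ + ∑ i, σ i • b i

variable (b₀ : E →L[ℝ] E →L[ℝ] ℝ) (b : ι → E →L[ℝ] E →L[ℝ] ℝ)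

@[simp]
theorem sum_smul_apply_apply (σ : ι → ℝ) (x y : E) :
    (∑ i, σ i • b i) x y = ∑ i, σ i * b i x y := by
  simp

@[simp]
theorem weightedForm_apply (σ : ι → ℝ) (x y : E) :
    weightedForm b₀ b σ x y = b₀ x y + ∑ i, σ i * b i x y := by
  simp [weightedForm]

theorem weightedForm_add_smul (σ τ : ι → ℝ) (t : ℝ) :
    weightedForm b₀ b (σ + t • τ) = weightedForm b₀ b σ + t • ∑ i, τ i • b i := by
  ext x y
  simp [weightedForm, add_mul, mul_assoc, Finset.sum_add_distrib, Finset.mul_sum, add_assoc]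

variable {b₀ b}

theorem sum_smul_symm (hb : ∀ i x y, b i x y = b i y x) (σ : ι → ℝ) (x y : E) :
    (∑ i, σ i • b i) x y = (∑ i, σ i • b i) y x := by
  simp only [sum_smul_apply_apply, hb _ x y]

theorem weightedForm_symm (hb₀ : ∀ x y, b₀ x y = b₀ y x) (hb : ∀ i x y, b i x y = b i y x)
    (σ : ι → ℝ) (x y : E) :
    weightedForm b₀ b σ x y = weightedForm b₀ b σ y x := by
  simp only [weightedForm_apply, hb₀ x y, hb _ x y]

theorem mul_le_weightedForm_self (hb₀ : ∀ v, 0 ≤ b₀ v v) (hb : ∀ i v, 0 ≤ b i v v)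
    {a : ℝ} {σ : ι → ℝ} (hσ : ∀ i, a ≤ σ i) (v : E) :
    min a 1 * (b₀ v v + ∑ i, b i v v) ≤ weightedForm b₀ b σ v v := by
  rw [weightedForm_apply, mul_add, Finset.mul_sum]
  gcongr with i
  · exact mul_le_of_le_one_left (hb₀ v) (min_le_right _ _)
  · exact hb i v
  · exact (min_le_left _ _).trans (hσ i)

end WeightedForm

theorem exists_pos_eventually_forall_le {ι : Type*} [Finite ι] {σ : ι → ℝ}
    (hσ : ∀ i, 0 < σ i) : ∃ a, 0 < a ∧ ∀ᶠ σ' in 𝓝 σ, ∀ i, a ≤ σ' i := by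
  have hsmall : ∀ᶠ a in 𝓝[>] (0 : ℝ), ∀ i, a < σ i :=
    eventually_all.2 fun i => nhdsWithin_le_nhds (eventually_lt_nhds (hσ i))
  obtain ⟨a, hσa, ha⟩ := (hsmall.and self_mem_nhdsWithin).exists
  refine ⟨a, ha, eventually_all.2 fun i => ?_⟩
  exact ((continuous_apply i).tendsto σ).eventually (eventually_ge_nhds (hσa i))

theorem stmt_10_general
    {H : Type*} [NormedAddCommGroup H] [InnerProductSpace ℝ H]
    {n m : ℕ}
    (b0 : H →L[ℝ] H →L[ℝ] ℝ) (b : Fin n → H →L[ℝ] H →L[ℝ] ℝ)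
    (hb0symm : ∀ u v : H, b0 u v = b0 v u)
    (hb0pos : ∀ v : H, 0 ≤ b0 v v)
    (hbsymm : ∀ i, ∀ u v : H, b i u v = b i v u)
    (hbpos : ∀ i, ∀ v : H, 0 ≤ b i v v)
    (β : ℝ) (hβ : 0 < β)
    (hcoer : ∀ v : H, β * ‖v‖ ^ 2 ≤ b0 v v + ∑ i, b i v v)
    (u : (Fin n → ℝ) → (H →L[ℝ] ℝ) → H)
    (hu : ∀ σ : Fin n → ℝ, (∀ i, 0 < σ i) → ∀ l : H →L[ℝ] ℝ,
      ∀ v : H, b0 (u σ l) v + ∑ i, σ i * b i (u σ l) v = l v)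
    (l : Fin m → (H →L[ℝ] ℝ)) :
    ∀ σ : Fin n → ℝ, (∀ i, 0 < σ i) → ∀ τ : Fin n → ℝ,
      (∀ j k : Fin m,
        HasDerivAt (fun t : ℝ => l k (u (σ + t • τ) (l j)))
          (-(∑ i, τ i * b i (u σ (l j)) (u σ (l k)))) 0) ∧
      ((∀ i, 0 ≤ τ i) →
        ∀ g : Fin m → ℝ,
          ∑ j, ∑ k, g j * (-(∑ i, τ i * b i (u σ (l j)) (u σ (l k)))) * g k ≤ 0) := by
  intro σ hσ τ
  obtain ⟨a, ha, hnear⟩ := exists_pos_eventually_forall_le hσ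
  have hστ : Tendsto (fun t : ℝ => σ + t • τ) (𝓝 0) (𝓝 σ) := by
    have hcont : Continuous fun t : ℝ => σ + t • τ := by fun_prop
    simpa using hcont.tendsto 0
  have hline : ∀ᶠ t in 𝓝 (0 : ℝ), ∀ i, a ≤ (σ + t • τ) i := hστ.eventually hnear
  have hcoer_line : ∀ᶠ t in 𝓝 (0 : ℝ), ∀ v,
      min a 1 * β * ‖v‖ ^ 2 ≤ (weightedForm b0 b σ + t • ∑ i, τ i • b i) v v :=
    hline.mono fun t ht v => by
      rw [← weightedForm_add_smul, mul_assoc]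
      exact (mul_le_mul_of_nonneg_left (hcoer v) (by positivity)).trans
        (mul_le_weightedForm_self hb0pos hbpos ht v)
  have hsol : ∀ f, ∀ᶠ t in 𝓝 (0 : ℝ), ∀ v,
      (weightedForm b0 b σ + t • ∑ i, τ i • b i) (u (σ + t • τ) f) v = f v :=
    fun f => hline.mono fun t ht v => by
      rw [← weightedForm_add_smul, weightedForm_apply]
      exact hu _ (fun i => ha.trans_le (ht i)) f v
  refine ⟨fun j k => ?_, fun hτ g => ?_⟩
  · simpa using hasDerivAt_apply_solution (weightedForm_symm hb0symm hbsymm σ)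
      (sum_smul_symm hbsymm τ) (by positivity) hcoer_line (hsol (l j)) (hsol (l k))
  · have hquad := sum_sum_mul_apply_mul (∑ i, τ i • b i) (fun j => u σ (l j)) g
    simp only [sum_smul_apply_apply] at hquad
    calc ∑ j, ∑ k, g j * (-(∑ i, τ i * b i (u σ (l j)) (u σ (l k)))) * g k
        = -∑ j, ∑ k, g j * (∑ i, τ i * b i (u σ (l j)) (u σ (l k))) * g k := by
          simp only [mul_neg, neg_mul, Finset.sum_neg_distrib]
      _ = -∑ i, τ i * b i (∑ j, g j • u σ (l j)) (∑ k, g k • u σ (l k)) := by rw [hquad]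
      _ ≤ 0 := neg_nonpos.2 (Finset.sum_nonneg fun i _ => mul_nonneg (hτ i) (hbpos i _))

/-- For every `σ ∈ ℝ^n_+` and every `τ ∈ ℝ^n`, each entry of `𝓕`
is differentiable at `σ` with directional derivative
`(d/dt)|_{t=0} 𝓕_{j,k}(σ + tτ) = −Σ_i τ_i b_i(u_σ^{l_j}, u_σ^{l_k})`;
consequently, if `τ ≥ 0` (elementwise), then the matrix
`𝓕'(σ)τ := ((d/dt)|_{t=0} 𝓕_{j,k}(σ + tτ))_{j,k}` is negative semidefinite. -/
theorem stmt_10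
    {H : Type*} [NormedAddCommGroup H] [InnerProductSpace ℝ H] [CompleteSpace H]
    {n m : ℕ}
    (b0 : H →L[ℝ] H →L[ℝ] ℝ) (b : Fin n → H →L[ℝ] H →L[ℝ] ℝ)
    (hb0symm : ∀ u v : H, b0 u v = b0 v u)
    (hb0pos : ∀ v : H, 0 ≤ b0 v v)
    (hbsymm : ∀ i, ∀ u v : H, b i u v = b i v u)
    (hbpos : ∀ i, ∀ v : H, 0 ≤ b i v v)
    (C β : ℝ) (hβ : 0 < β) (hCβ : β ≤ C)
    (hcoer : ∀ v : H, β * ‖v‖ ^ 2 ≤ b0 v v + ∑ i, b i v v)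
    (hbound : ∀ v : H, b0 v v + ∑ i, b i v v ≤ C * ‖v‖ ^ 2)
    (u : (Fin n → ℝ) → (H →L[ℝ] ℝ) → H)
    (hu : ∀ σ : Fin n → ℝ, (∀ i, 0 < σ i) → ∀ l : H →L[ℝ] ℝ,
      ∀ v : H, b0 (u σ l) v + ∑ i, σ i * b i (u σ l) v = l v)
    (l : Fin m → (H →L[ℝ] ℝ)) :
    ∀ σ : Fin n → ℝ, (∀ i, 0 < σ i) → ∀ τ : Fin n → ℝ,
      (∀ j k : Fin m,
        HasDerivAt (fun t : ℝ => l k (u (σ + t • τ) (l j)))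
          (-(∑ i, τ i * b i (u σ (l j)) (u σ (l k)))) 0) ∧
      ((∀ i, 0 ≤ τ i) →
        ∀ g : Fin m → ℝ,
          ∑ j, ∑ k, g j * (-(∑ i, τ i * b i (u σ (l j)) (u σ (l k)))) * g k ≤ 0) :=
  stmt_10_general b0 b hb0symm hb0pos hbsymm hbpos β hβ hcoer u hu l
end

section
/- For all σ, σ^{(0)} ∈ ℝ^n_+ and all t ∈ [0,1], the matrix (1−t)·𝓕(σ^{(0)}) + t·𝓕(σ) − 𝓕((1−t)σ^{(0)} + tσ) is positive semidefinite, i.e., 𝓕 is convex along segments with respect to the Loewner order. -/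
open scoped Matrix

/-!
Write `B_σ` for the form `b_σ` and `w_σ := ∑ⱼ gⱼ u_σ^{lⱼ}` for the solution with right-hand side
`L := ∑ⱼ gⱼ lⱼ`, so that `gᵀ 𝓕(σ) g = L(w_σ)`. Since `B_σ` is symmetric and positive semidefinite,
`L(w_σ) = max_v (2 L(v) - B_σ(v, v))` (Dirichlet's principle), a supremum of functions that are
affine in `σ`. Hence `σ ↦ L(w_σ)` is convex: testing the two endpoint problems with `v := w_τ` at
`τ := (1-t)σ⁽⁰⁾ + tσ` and using `B_τ = (1-t)B_{σ⁽⁰⁾} + tB_σ` gives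
`L(w_τ) ≤ (1-t) L(w_{σ⁽⁰⁾}) + t L(w_σ)`.
-/

section ResponseMatrix

variable {H : Type*} [NormedAddCommGroup H] [NormedSpace ℝ H] {m : ℕ}

def responseMatrix (L : Fin m → H →L[ℝ] ℝ) (w : Fin m → H) : Matrix (Fin m) (Fin m) ℝ :=
  Matrix.of fun j k => L k (w j)

lemma responseMatrix_isHermitian {B : H →L[ℝ] H →L[ℝ] ℝ} (hsymm : ∀ x y, B x y = B y x)
    {L : Fin m → H →L[ℝ] ℝ} {w : Fin m → H} (hw : ∀ j, B (w j) = L j) :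
    (responseMatrix L w).IsHermitian := by
  ext j k
  simp only [responseMatrix, Matrix.conjTranspose_apply, Matrix.of_apply, star_trivial, ← hw]
  exact hsymm _ _

lemma dotProduct_responseMatrix_mulVec (L : Fin m → H →L[ℝ] ℝ) (w : Fin m → H)
    (g : Fin m → ℝ) :
    star g ⬝ᵥ responseMatrix L w *ᵥ g = (∑ k, g k • L k) (∑ j, g j • w j) := by
  simp only [dotProduct, Matrix.mulVec, responseMatrix, Matrix.of_apply, star_trivial,
    map_sum, map_smul, sum_apply, smul_apply, smul_eq_mul, Finset.mul_sum]
  exact Finset.sum_congr rfl fun j _ => Finset.sum_congr rfl fun k _ => by ring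

lemma two_mul_apply_sub_le_apply_of_eq {B : H →L[ℝ] H →L[ℝ] ℝ} (hsymm : ∀ x y, B x y = B y x)
    (hpos : ∀ x, 0 ≤ B x x) {L : H →L[ℝ] ℝ} {w : H} (hw : B w = L) (v : H) :
    2 * L v - B v v ≤ L w := by
  have h := hpos (w - v)
  simp only [map_sub, sub_apply, hsymm v w, hw] at h
  linarith

lemma apply_solution_le_convexComb {B₀ B₁ : H →L[ℝ] H →L[ℝ] ℝ}
    (hsymm₀ : ∀ x y, B₀ x y = B₀ y x) (hpos₀ : ∀ x, 0 ≤ B₀ x x)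
    (hsymm₁ : ∀ x y, B₁ x y = B₁ y x) (hpos₁ : ∀ x, 0 ≤ B₁ x x)
    {t : ℝ} (ht : t ∈ Set.Icc (0 : ℝ) 1) {L : H →L[ℝ] ℝ} {w₀ w₁ w : H}
    (h₀ : B₀ w₀ = L) (h₁ : B₁ w₁ = L) (h : ((1 - t) • B₀ + t • B₁) w = L) :
    L w ≤ (1 - t) * L w₀ + t * L w₁ := by
  have e₀ := two_mul_apply_sub_le_apply_of_eq hsymm₀ hpos₀ h₀ w
  have e₁ := two_mul_apply_sub_le_apply_of_eq hsymm₁ hpos₁ h₁ w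
  have hw : (1 - t) * B₀ w w + t * B₁ w w = L w := by
    rw [← h]; simp
  linarith [mul_le_mul_of_nonneg_left e₀ (sub_nonneg.2 ht.2),
    mul_le_mul_of_nonneg_left e₁ ht.1]

theorem posSemidef_convexComb_sub_responseMatrix {B₀ B₁ : H →L[ℝ] H →L[ℝ] ℝ}
    (hsymm₀ : ∀ x y, B₀ x y = B₀ y x) (hpos₀ : ∀ x, 0 ≤ B₀ x x)
    (hsymm₁ : ∀ x y, B₁ x y = B₁ y x) (hpos₁ : ∀ x, 0 ≤ B₁ x x)
    {t : ℝ} (ht : t ∈ Set.Icc (0 : ℝ) 1) {L : Fin m → H →L[ℝ] ℝ} {w₀ w₁ w : Fin m → H}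
    (h₀ : ∀ j, B₀ (w₀ j) = L j) (h₁ : ∀ j, B₁ (w₁ j) = L j)
    (h : ∀ j, ((1 - t) • B₀ + t • B₁) (w j) = L j) :
    ((1 - t) • responseMatrix L w₀ + t • responseMatrix L w₁ - responseMatrix L w).PosSemidef := by
  rw [Matrix.posSemidef_iff_dotProduct_mulVec]
  refine ⟨?_, fun g => ?_⟩
  · have hsymm : ∀ x y, ((1 - t) • B₀ + t • B₁) x y = ((1 - t) • B₀ + t • B₁) y x := by
      intro x y; simp [hsymm₀ x y, hsymm₁ x y]
    exact (((responseMatrix_isHermitian hsymm₀ h₀).smul (IsSelfAdjoint.all _)).add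
      ((responseMatrix_isHermitian hsymm₁ h₁).smul (IsSelfAdjoint.all _))).sub (responseMatrix_isHermitian hsymm h)
  · simp only [Matrix.sub_mulVec, Matrix.add_mulVec, Matrix.smul_mulVec, dotProduct_sub,
      dotProduct_add, dotProduct_smul, dotProduct_responseMatrix_mulVec, smul_eq_mul, sub_nonneg]
    exact apply_solution_le_convexComb hsymm₀ hpos₀ hsymm₁ hpos₁ ht
      (by simp only [map_sum, map_smul, h₀]) (by simp only [map_sum, map_smul, h₁])
      (by simp only [map_sum, map_smul, h])

end ResponseMatrix

section ParamForm

variable {H : Type*} [NormedAddCommGroup H] [NormedSpace ℝ H] {n : ℕ}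
  (b0 : H →L[ℝ] H →L[ℝ] ℝ) (b : Fin n → H →L[ℝ] H →L[ℝ] ℝ)

noncomputable def paramForm (σ : Fin n → ℝ) : H →L[ℝ] H →L[ℝ] ℝ := b0 + ∑ i, σ i • b i

lemma paramForm_apply (σ : Fin n → ℝ) (x y : H) :
    paramForm b0 b σ x y = b0 x y + ∑ i, σ i * b i x y := by
  simp [paramForm]

variable {b0 b}

lemma paramForm_symm (hb0symm : ∀ x y, b0 x y = b0 y x) (hbsymm : ∀ i x y, b i x y = b i y x)
    (σ : Fin n → ℝ) (x y : H) : paramForm b0 b σ x y = paramForm b0 b σ y x := by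
  simp only [paramForm_apply, hb0symm x y, hbsymm _ x y]

lemma paramForm_self_nonneg (hb0pos : ∀ x, 0 ≤ b0 x x) (hbpos : ∀ i x, 0 ≤ b i x x)
    {σ : Fin n → ℝ} (hσ : ∀ i, 0 ≤ σ i) (x : H) : 0 ≤ paramForm b0 b σ x x := by
  rw [paramForm_apply]
  exact add_nonneg (hb0pos x) (Finset.sum_nonneg fun i _ => mul_nonneg (hσ i) (hbpos i x))

lemma paramForm_convexComb (σ₀ σ : Fin n → ℝ) (t : ℝ) :
    paramForm b0 b ((1 - t) • σ₀ + t • σ) = (1 - t) • paramForm b0 b σ₀ + t • paramForm b0 b σ := by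
  ext x y
  simp only [paramForm_apply, add_apply, smul_apply,
    Pi.add_apply, Pi.smul_apply, smul_eq_mul, add_mul, Finset.sum_add_distrib, mul_assoc, ← Finset.mul_sum]
  ring

end ParamForm

theorem stmt_13_general
    {H : Type*} [NormedAddCommGroup H] [InnerProductSpace ℝ H]
    {n m : ℕ}
    (b0 : H →L[ℝ] H →L[ℝ] ℝ) (b : Fin n → H →L[ℝ] H →L[ℝ] ℝ)
    (hb0symm : ∀ u v : H, b0 u v = b0 v u)
    (hb0pos : ∀ v : H, 0 ≤ b0 v v)
    (hbsymm : ∀ i, ∀ u v : H, b i u v = b i v u)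
    (hbpos : ∀ i, ∀ v : H, 0 ≤ b i v v)
    (u : (Fin n → ℝ) → (H →L[ℝ] ℝ) → H)
    (hu : ∀ σ : Fin n → ℝ, (∀ i, 0 < σ i) → ∀ l : H →L[ℝ] ℝ,
      ∀ v : H, b0 (u σ l) v + ∑ i, σ i * b i (u σ l) v = l v)
    (l : Fin m → (H →L[ℝ] ℝ)) :
    ∀ σ σ₀ : Fin n → ℝ, (∀ i, 0 < σ i) → (∀ i, 0 < σ₀ i) →
      ∀ t ∈ Set.Icc (0 : ℝ) 1,
        Matrix.PosSemidef
          (Matrix.of fun j k : Fin m =>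
            (1 - t) * l k (u σ₀ (l j)) + t * l k (u σ (l j)) -
              l k (u ((1 - t) • σ₀ + t • σ) (l j))) := by
  intro σ σ₀ hσ hσ₀ t ht
  have hτ : ∀ i, 0 < ((1 - t) • σ₀ + t • σ) i := fun i => by
    simpa using convex_Ioi (0 : ℝ) (hσ₀ i) (hσ i) (sub_nonneg.2 ht.2) ht.1 (sub_add_cancel 1 t)
  have solves : ∀ σ', (∀ i, 0 < σ' i) → ∀ j, paramForm b0 b σ' (u σ' (l j)) = l j :=
    fun σ' hσ' j => by ext v; rw [paramForm_apply]; exact hu σ' hσ' (l j) v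
  have key := posSemidef_convexComb_sub_responseMatrix
    (paramForm_symm hb0symm hbsymm σ₀) (paramForm_self_nonneg hb0pos hbpos fun i => (hσ₀ i).le)
    (paramForm_symm hb0symm hbsymm σ) (paramForm_self_nonneg hb0pos hbpos fun i => (hσ i).le)
    ht (solves σ₀ hσ₀) (solves σ hσ) (by rw [← paramForm_convexComb]; exact solves _ hτ)
  convert key using 1
  ext j k
  simp [responseMatrix]

/-- For all `σ, σ⁽⁰⁾ ∈ ℝ^n_+` and all `t ∈ [0,1]`, the matrix
`(1−t)·𝓕(σ⁽⁰⁾) + t·𝓕(σ) − 𝓕((1−t)σ⁽⁰⁾ + tσ)` is positive semidefinite, i.e.,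
`𝓕` is convex along segments with respect to the Loewner order. -/
theorem stmt_13
    {H : Type*} [NormedAddCommGroup H] [InnerProductSpace ℝ H] [CompleteSpace H]
    {n m : ℕ}
    (b0 : H →L[ℝ] H →L[ℝ] ℝ) (b : Fin n → H →L[ℝ] H →L[ℝ] ℝ)
    (hb0symm : ∀ u v : H, b0 u v = b0 v u)
    (hb0pos : ∀ v : H, 0 ≤ b0 v v)
    (hbsymm : ∀ i, ∀ u v : H, b i u v = b i v u)
    (hbpos : ∀ i, ∀ v : H, 0 ≤ b i v v)
    (C β : ℝ) (hβ : 0 < β) (hCβ : β ≤ C)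
    (hcoer : ∀ v : H, β * ‖v‖ ^ 2 ≤ b0 v v + ∑ i, b i v v)
    (hbound : ∀ v : H, b0 v v + ∑ i, b i v v ≤ C * ‖v‖ ^ 2)
    (u : (Fin n → ℝ) → (H →L[ℝ] ℝ) → H)
    (hu : ∀ σ : Fin n → ℝ, (∀ i, 0 < σ i) → ∀ l : H →L[ℝ] ℝ,
      ∀ v : H, b0 (u σ l) v + ∑ i, σ i * b i (u σ l) v = l v)
    (l : Fin m → (H →L[ℝ] ℝ)) :
    ∀ σ σ₀ : Fin n → ℝ, (∀ i, 0 < σ i) → (∀ i, 0 < σ₀ i) →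
      ∀ t ∈ Set.Icc (0 : ℝ) 1,
        Matrix.PosSemidef
          (Matrix.of fun j k : Fin m =>
            (1 - t) * l k (u σ₀ (l j)) + t * l k (u σ (l j)) -
              l k (u ((1 - t) • σ₀ + t • σ) (l j))) :=
  stmt_13_general b0 b hb0symm hb0pos hbsymm hbpos u hu l
end

section
/- For all l, r ∈ H', all σ ∈ ℝ^n_+ and all i ∈ {1,…,n}, the partial derivatives of the exact and Galerkin-approximated measurements satisfy ∂𝓕_{l,r}(σ)/∂σ_i − ∂F_{l,r}(σ)/∂σ_i = b_i(ũ_σ^l, ũ_σ^r − u_σ^r) + b_i(ũ_σ^l − u_σ^l, u_σ^r), where ∂𝓕_{l,r}(σ)/∂σ_i = −b_i(u_σ^l, u_σ^r) and ∂F_{l,r}(σ)/∂σ_i = −b_i(ũ_σ^l, ũ_σ^r). -/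
/-! Write `B τ = b₀ + ∑ τᵢ bᵢ`, read as a map `H → H'`. By Lax–Milgram `B σ` is invertible, so
`A τ := (B σ)⁻¹ ∘ B τ` lies in the Banach algebra `H →L H` with `A σ = 1`; near `σ` the solution is
`u_τ^l = (A τ)⁻¹ (B σ)⁻¹ l`, and differentiating inversion at `1` gives
`∂ᵢ r(u_σ^l) = -r((B σ)⁻¹ bᵢ(u_σ^l, ·))`. Since `B σ` is symmetric, `r ∘ (B σ)⁻¹` is evaluation at
the adjoint solution `u_σ^r`, whence `∂ᵢ r(u_σ^l) = -bᵢ(u_σ^l, u_σ^r)`. The Galerkin solution is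
the same construction on the Hilbert space `V`, and the difference formula is then bilinearity. -/

open Filter Topology ContinuousLinearMap

namespace IsCoercive

variable {E : Type*} [NormedAddCommGroup E] [InnerProductSpace ℝ E] [CompleteSpace E]
  {B : E →L[ℝ] E →L[ℝ] ℝ}

noncomputable def equivDual (hB : IsCoercive B) : E ≃L[ℝ] StrongDual ℝ E :=
  .ofBijective B
    (LinearMap.ker_eq_bot'.2 fun v hv => by
      obtain ⟨C, hC, hCv⟩ := hB
      have hCv : C * ‖v‖ * ‖v‖ ≤ 0 := by simpa [show B v = 0 from hv] using hCv v
      rcases (norm_nonneg v).eq_or_lt with h | h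
      · exact norm_eq_zero.1 h.symm
      · exact absurd hCv (not_le.2 (by positivity)))
    (LinearMap.range_eq_top.2 fun φ =>
      ⟨hB.continuousLinearEquivOfBilin.symm ((InnerProductSpace.toDual ℝ E).symm φ), by
        ext w
        simp [← hB.continuousLinearEquivOfBilin_apply]⟩)

@[simp]
theorem coe_equivDual (hB : IsCoercive B) : ⇑hB.equivDual = B := rfl

end IsCoercive

section

variable {E : Type*} [NormedAddCommGroup E] [InnerProductSpace ℝ E] [CompleteSpace E]
  {P : Type*} [NormedAddCommGroup P] [NormedSpace ℝ P]

theorem IsCoercive.exists_hasFDerivAt_apply_solution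
    {B : P → E →L[ℝ] E →L[ℝ] ℝ} {B' : P →L[ℝ] E →L[ℝ] E →L[ℝ] ℝ} {σ : P}
    (hB : HasFDerivAt B B' σ) (hcoer : IsCoercive (B σ)) (hsymm : ∀ u v, B σ u v = B σ v u)
    {l r : StrongDual ℝ E} {w : P → E} (hw : ∀ᶠ τ in 𝓝 σ, B τ (w τ) = l)
    {z : E} (hz : B σ z = r) :
    ∃ D : P →L[ℝ] ℝ, HasFDerivAt (fun τ => r (w τ)) D σ ∧ ∀ δ, D δ = -B' δ (w σ) z := by
  set e := hcoer.equivDual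
  set A : P → E →L[ℝ] E := fun τ => (e.symm : StrongDual ℝ E →L[ℝ] E) ∘L B τ
  have hAσ : A σ = 1 := by ext v; exact e.symm_apply_apply v
  have hA : HasFDerivAt A (compL ℝ E _ E e.symm ∘L B') σ := by
    exact (compL ℝ E _ E (e.symm : StrongDual ℝ E →L[ℝ] E)).hasFDerivAt.comp (f := B) σ hB
  have hinv : HasFDerivAt (fun τ => Ring.inverse (A τ)) (-(compL ℝ E _ E e.symm ∘L B')) σ := by
    have hinv1 := hasFDerivAt_ringInverse (𝕜 := ℝ) (1 : (E →L[ℝ] E)ˣ)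
    rw [Units.val_one, inv_one, Units.val_one, ← hAσ] at hinv1
    refine (hinv1.comp σ hA).congr_fderiv ?_
    ext δ v
    simp [hAσ]
  have hsol : ∀ᶠ τ in 𝓝 σ, w τ = Ring.inverse (A τ) (e.symm l) := by
    have hunit : ∀ᶠ τ in 𝓝 σ, IsUnit (A τ) :=
      hA.continuousAt.preimage_mem_nhds (Units.isOpen.mem_nhds (hAσ ▸ isUnit_one))
    filter_upwards [hw, hunit] with τ hwτ hτ
    calc w τ = (Ring.inverse (A τ) * A τ) (w τ) := by rw [Ring.inverse_mul_cancel _ hτ]; rfl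
      _ = Ring.inverse (A τ) (e.symm l) := by simp [A, hwτ]
  have hadjoint : ∀ φ, r (e.symm φ) = φ z := fun φ => by
    rw [← hz, hsymm, ← hcoer.coe_equivDual, ContinuousLinearEquiv.apply_symm_apply]
  refine ⟨_, ((r.comp (apply ℝ E (e.symm l))).hasFDerivAt.comp σ hinv).congr_of_eventuallyEq
    (hsol.mono fun τ hτ => by simp [hτ]), fun δ => ?_⟩
  have hwσ : w σ = e.symm l := by rw [hsol.self_of_nhds, hAσ, Ring.inverse_one]; rfl
  simp only [comp_apply, neg_apply, apply_apply, compL_apply, ContinuousLinearEquiv.coe_coe,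
    map_neg, hadjoint, hwσ]

end

section AffineFamily

variable {n : ℕ}

theorem hasFDerivAt_add_sum_smul {F : Type*} [NormedAddCommGroup F] [NormedSpace ℝ F]
    (b0 : F) (b : Fin n → F) (σ : Fin n → ℝ) :
    HasFDerivAt (fun τ : Fin n → ℝ => b0 + ∑ i, τ i • b i)
      (∑ i, (proj i : (Fin n → ℝ) →L[ℝ] ℝ).smulRight (b i)) σ :=
  (HasFDerivAt.fun_sum fun i _ => (hasFDerivAt_apply i σ).smul_const (b i)).const_add b0

theorem IsCoercive.add_sum_smul {E : Type*} [NormedAddCommGroup E] [NormedSpace ℝ E]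
    {b0 : E →L[ℝ] E →L[ℝ] ℝ} {b : Fin n → E →L[ℝ] E →L[ℝ] ℝ} (hcoer : IsCoercive (b0 + ∑ i, b i))
    (hb0pos : ∀ v, 0 ≤ b0 v v) (hbpos : ∀ i v, 0 ≤ b i v v) {σ : Fin n → ℝ}
    (hσ : ∀ i, 0 < σ i) : IsCoercive (b0 + ∑ i, σ i • b i) := by
  obtain ⟨C, hC, hCv⟩ := hcoer
  obtain ⟨m, hm, hm1, hmσ⟩ : ∃ m : ℝ, 0 < m ∧ m ≤ 1 ∧ ∀ i, m ≤ σ i :=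
    (Eventually.and (self_mem_nhdsWithin : ∀ᶠ m in 𝓝[>] (0 : ℝ), 0 < m)
      (((eventually_le_nhds one_pos).and
        (eventually_all.2 fun i => eventually_le_nhds (hσ i))).filter_mono
          nhdsWithin_le_nhds)).exists
  refine ⟨m * C, mul_pos hm hC, fun v => ?_⟩
  have hv := hCv v
  simp only [add_apply, FunLike.coe_sum, Finset.sum_apply, smul_apply, smul_eq_mul] at hv ⊢
  calc m * C * ‖v‖ * ‖v‖ = m * (C * ‖v‖ * ‖v‖) := by ring
    _ ≤ m * (b0 v v + ∑ i, b i v v) := by gcongr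
    _ = m * b0 v v + ∑ i, m * b i v v := by rw [mul_add, Finset.mul_sum]
    _ ≤ b0 v v + ∑ i, σ i * b i v v := add_le_add (mul_le_of_le_one_left (hb0pos v) hm1)
      (Finset.sum_le_sum fun i _ => mul_le_mul_of_nonneg_right (hmσ i) (hbpos i v))

theorem exists_hasFDerivAt_apply_solution_add_sum_smul
    {E : Type*} [NormedAddCommGroup E] [InnerProductSpace ℝ E] [CompleteSpace E]
    {b0 : E →L[ℝ] E →L[ℝ] ℝ} {b : Fin n → E →L[ℝ] E →L[ℝ] ℝ}
    (hb0symm : ∀ u v, b0 u v = b0 v u) (hbsymm : ∀ i u v, b i u v = b i v u)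
    (hb0pos : ∀ v, 0 ≤ b0 v v) (hbpos : ∀ i v, 0 ≤ b i v v) (hcoer : IsCoercive (b0 + ∑ i, b i))
    {l r : StrongDual ℝ E} {w : (Fin n → ℝ) → E}
    (hw : ∀ τ : Fin n → ℝ, (∀ i, 0 < τ i) → ∀ v, b0 (w τ) v + ∑ i, τ i * b i (w τ) v = l v)
    {σ : Fin n → ℝ} (hσ : ∀ i, 0 < σ i) {z : E}
    (hz : ∀ v, b0 z v + ∑ i, σ i * b i z v = r v) :
    ∃ D : (Fin n → ℝ) →L[ℝ] ℝ,
      HasFDerivAt (fun τ => r (w τ)) D σ ∧ ∀ i, D (Pi.single i 1) = -b i (w σ) z := by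
  have hpos : ∀ᶠ τ in 𝓝 σ, ∀ i, 0 < τ i :=
    eventually_all.2 fun i =>
      continuousAt_const.eventually_lt (continuous_apply i).continuousAt (hσ i)
  obtain ⟨D, hD, hDδ⟩ := (hcoer.add_sum_smul hb0pos hbpos hσ).exists_hasFDerivAt_apply_solution
    (hasFDerivAt_add_sum_smul b0 b σ) (fun u v => by simp [hb0symm u v, hbsymm _ u v])
    (hpos.mono fun τ hτ => ext fun v => by simpa using hw τ hτ v)
    (ext fun v => by simpa using hz v)
  refine ⟨D, hD, fun i => ?_⟩
  rw [hDδ]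
  simp [Pi.single_apply]

end AffineFamily

theorem stmt_15_general
    {H : Type*} [NormedAddCommGroup H] [InnerProductSpace ℝ H] [CompleteSpace H]
    {n : ℕ}
    (b0 : H →L[ℝ] H →L[ℝ] ℝ) (b : Fin n → H →L[ℝ] H →L[ℝ] ℝ)
    (hb0symm : ∀ u v : H, b0 u v = b0 v u)
    (hb0pos : ∀ v : H, 0 ≤ b0 v v)
    (hbsymm : ∀ i, ∀ u v : H, b i u v = b i v u)
    (hbpos : ∀ i, ∀ v : H, 0 ≤ b i v v)
    (β : ℝ) (hβ : 0 < β)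
    (hcoer : ∀ v : H, β * ‖v‖ ^ 2 ≤ b0 v v + ∑ i, b i v v)
    (u : (Fin n → ℝ) → (H →L[ℝ] ℝ) → H)
    (hu : ∀ σ : Fin n → ℝ, (∀ i, 0 < σ i) → ∀ l : H →L[ℝ] ℝ,
      ∀ v : H, b0 (u σ l) v + ∑ i, σ i * b i (u σ l) v = l v)
    (V : Submodule ℝ H) [FiniteDimensional ℝ V]
    (ut : (Fin n → ℝ) → (H →L[ℝ] ℝ) → H)
    (hmem : ∀ σ l, ut σ l ∈ V)
    (hut : ∀ σ : Fin n → ℝ, (∀ i, 0 < σ i) → ∀ l : H →L[ℝ] ℝ,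
      ∀ v ∈ V, b0 (ut σ l) v + ∑ i, σ i * b i (ut σ l) v = l v) :
    ∀ l r : H →L[ℝ] ℝ, ∀ σ : Fin n → ℝ, (∀ i, 0 < σ i) → ∀ i : Fin n,
      ∃ DF DFt : (Fin n → ℝ) →L[ℝ] ℝ,
        HasFDerivAt (fun σ' => r (u σ' l)) DF σ ∧
        HasFDerivAt (fun σ' => r (ut σ' l)) DFt σ ∧
        DF (Pi.single i 1) = -(b i (u σ l) (u σ r)) ∧
        DFt (Pi.single i 1) = -(b i (ut σ l) (ut σ r)) ∧
        DF (Pi.single i 1) - DFt (Pi.single i 1) =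
          b i (ut σ l) (ut σ r - u σ r) + b i (ut σ l - u σ l) (u σ r) := by
  intro l r σ hσ i
  have hcoerH : IsCoercive (b0 + ∑ j, b j) :=
    ⟨β, hβ, fun v => by simpa [sq, mul_assoc] using hcoer v⟩
  obtain ⟨DF, hDF, hDFi⟩ := exists_hasFDerivAt_apply_solution_add_sum_smul hb0symm hbsymm
    hb0pos hbpos hcoerH (hu · · l) hσ (hu σ hσ r)
  have hcoerV : IsCoercive (b0.bilinearComp V.subtypeL V.subtypeL +
      ∑ j, (b j).bilinearComp V.subtypeL V.subtypeL) :=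
    let ⟨c, hc, hcv⟩ := hcoerH
    ⟨c, hc, fun v => by simpa using hcv v⟩
  obtain ⟨DFt, hDFt, hDFti⟩ := exists_hasFDerivAt_apply_solution_add_sum_smul
    (b0 := b0.bilinearComp V.subtypeL V.subtypeL)
    (b := fun j => (b j).bilinearComp V.subtypeL V.subtypeL)
    (fun u v => hb0symm u v) (fun j u v => hbsymm j u v) (fun v => hb0pos v)
    (fun j v => hbpos j v) hcoerV (l := l ∘L V.subtypeL) (r := r ∘L V.subtypeL)
    (w := fun τ => ⟨ut τ l, hmem τ l⟩) (fun τ hτ v => hut τ hτ l v v.2) hσ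
    (z := ⟨ut σ r, hmem σ r⟩) (fun v => hut σ hσ r v v.2)
  have hDFti' : DFt (Pi.single i 1) = -b i (ut σ l) (ut σ r) := hDFti i
  refine ⟨DF, DFt, hDF, hDFt, hDFi i, hDFti', ?_⟩
  rw [hDFi i, hDFti', map_sub, map_sub, sub_apply]
  ring

/-- For all `l, r ∈ H'`, all `σ ∈ ℝ^n_+` and all `i`, the partial
derivatives of the exact and Galerkin-approximated measurements satisfy
`∂𝓕_{l,r}(σ)/∂σ_i − ∂F_{l,r}(σ)/∂σ_i
  = b_i(ũ_σ^l, ũ_σ^r − u_σ^r) + b_i(ũ_σ^l − u_σ^l, u_σ^r)`,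
where `∂𝓕_{l,r}(σ)/∂σ_i = −b_i(u_σ^l, u_σ^r)` and
`∂F_{l,r}(σ)/∂σ_i = −b_i(ũ_σ^l, ũ_σ^r)`. -/
theorem stmt_15
    {H : Type*} [NormedAddCommGroup H] [InnerProductSpace ℝ H] [CompleteSpace H]
    {n : ℕ}
    (b0 : H →L[ℝ] H →L[ℝ] ℝ) (b : Fin n → H →L[ℝ] H →L[ℝ] ℝ)
    (hb0symm : ∀ u v : H, b0 u v = b0 v u)
    (hb0pos : ∀ v : H, 0 ≤ b0 v v)
    (hbsymm : ∀ i, ∀ u v : H, b i u v = b i v u)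
    (hbpos : ∀ i, ∀ v : H, 0 ≤ b i v v)
    (C β : ℝ) (hβ : 0 < β) (hCβ : β ≤ C)
    (hcoer : ∀ v : H, β * ‖v‖ ^ 2 ≤ b0 v v + ∑ i, b i v v)
    (hbound : ∀ v : H, b0 v v + ∑ i, b i v v ≤ C * ‖v‖ ^ 2)
    (u : (Fin n → ℝ) → (H →L[ℝ] ℝ) → H)
    (hu : ∀ σ : Fin n → ℝ, (∀ i, 0 < σ i) → ∀ l : H →L[ℝ] ℝ,
      ∀ v : H, b0 (u σ l) v + ∑ i, σ i * b i (u σ l) v = l v)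
    (V : Submodule ℝ H) [FiniteDimensional ℝ V]
    (ut : (Fin n → ℝ) → (H →L[ℝ] ℝ) → H)
    (hmem : ∀ σ l, ut σ l ∈ V)
    (hut : ∀ σ : Fin n → ℝ, (∀ i, 0 < σ i) → ∀ l : H →L[ℝ] ℝ,
      ∀ v ∈ V, b0 (ut σ l) v + ∑ i, σ i * b i (ut σ l) v = l v) :
    ∀ l r : H →L[ℝ] ℝ, ∀ σ : Fin n → ℝ, (∀ i, 0 < σ i) → ∀ i : Fin n,
      ∃ DF DFt : (Fin n → ℝ) →L[ℝ] ℝ,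
        HasFDerivAt (fun σ' => r (u σ' l)) DF σ ∧
        HasFDerivAt (fun σ' => r (ut σ' l)) DFt σ ∧
        DF (Pi.single i 1) = -(b i (u σ l) (u σ r)) ∧
        DFt (Pi.single i 1) = -(b i (ut σ l) (ut σ r)) ∧
        DF (Pi.single i 1) - DFt (Pi.single i 1) =
          b i (ut σ l) (ut σ r - u σ r) + b i (ut σ l - u σ l) (u σ r) :=
  stmt_15_general b0 b hb0symm hb0pos hbsymm hbpos β hβ hcoer u hu V ut hmem hut
end
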